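/- Let V be a finite-dimensional vector space over a field K and let λ : V → K be a nonzero linear functional. Let P = {g ∈ GL(V) : λ ∘ g = λ} be the stabilizer of λ. For d with 1 ≤ d ≤ dim V, two d-dimensional subspaces W, W' of V lie in the same P-orbit (i.e., there exists g ∈ P with g(W) = W') if and only if (W ⊆ ker λ ↔ W' ⊆ ker λ). In particular, if 1 ≤ d ≤ dim V − 1, the P-action on the set of d-dimensional subspaces of V has exactly two orbits. -/

import Mathlib

/-!
Inside the stabilizer of `lam` one can prescribe an arbitrary automorphism of `ker lam` together
with the image `v'` of a vector `v ∉ ker lam`, as long as `lam v' = lam v`: glue the two along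
`V = ker lam ⊕ K v = ker lam ⊕ K v'`. Since `GL(ker lam)` is transitive on subspaces of a given
dimension, this moves any `W ≤ ker lam` to any `W' ≤ ker lam` of the same dimension, and it moves
`W = (ker lam ⊓ W) ⊕ K w` (with `lam w = 1`) onto `W' = (ker lam ⊓ W') ⊕ K w'` piece by piece.
Conversely, `W ≤ ker lam` is preserved by the stabilizer, so it separates the two orbits.
-/

open Module Submodule

section ofIsCompl

variable {R V V' : Type*} [Ring R] [AddCommGroup V] [Module R V] [AddCommGroup V'] [Module R V']
  {p q : Submodule R V} {p' q' : Submodule R V'}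

noncomputable def LinearEquiv.ofIsCompl (h : IsCompl p q) (h' : IsCompl p' q')
    (e : p ≃ₗ[R] p') (f : q ≃ₗ[R] q') : V ≃ₗ[R] V' :=
  (p.prodEquivOfIsCompl q h).symm ≪≫ₗ e.prodCongr f ≪≫ₗ p'.prodEquivOfIsCompl q' h'

variable (h : IsCompl p q) (h' : IsCompl p' q') (e : p ≃ₗ[R] p') (f : q ≃ₗ[R] q')

theorem LinearEquiv.ofIsCompl_apply_left (x : p) : LinearEquiv.ofIsCompl h h' e f x = e x := by
  simp [LinearEquiv.ofIsCompl]

theorem LinearEquiv.ofIsCompl_apply_right (x : q) : LinearEquiv.ofIsCompl h h' e f x = f x := by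
  simp [LinearEquiv.ofIsCompl]

theorem LinearEquiv.ofIsCompl_comp_subtype_left :
    (LinearEquiv.ofIsCompl h h' e f : V →ₗ[R] V') ∘ₗ p.subtype = p'.subtype ∘ₗ (e : p →ₗ[R] p') :=
  LinearMap.ext (LinearEquiv.ofIsCompl_apply_left h h' e f)

theorem LinearEquiv.map_ofIsCompl_left :
    p.map (LinearEquiv.ofIsCompl h h' e f : V →ₗ[R] V') = p' :=
  calc p.map (LinearEquiv.ofIsCompl h h' e f : V →ₗ[R] V')
      = LinearMap.range ((LinearEquiv.ofIsCompl h h' e f : V →ₗ[R] V') ∘ₗ p.subtype) := by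
        rw [LinearMap.range_comp, range_subtype]
    _ = p' := by
        rw [LinearEquiv.ofIsCompl_comp_subtype_left, LinearMap.range_comp, LinearEquiv.range,
          map_subtype_top]

end ofIsCompl

section Subspaces

variable {K V : Type*} [Field K] [AddCommGroup V] [Module K V]

theorem Submodule.exists_linearEquiv_map_eq_of_finrank_eq [FiniteDimensional K V]
    {U U' : Submodule K V} (h : finrank K U = finrank K U') :
    ∃ g : V ≃ₗ[K] V, U.map (g : V →ₗ[K] V) = U' := by
  obtain ⟨C, hC⟩ := U.exists_isCompl
  obtain ⟨C', hC'⟩ := U'.exists_isCompl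
  have hCC' : finrank K C = finrank K C' := by
    have := finrank_add_eq_of_isCompl hC
    have := finrank_add_eq_of_isCompl hC'
    omega
  exact ⟨.ofIsCompl hC hC' (.ofFinrankEq _ _ h) (.ofFinrankEq _ _ hCC'),
    LinearEquiv.map_ofIsCompl_left _ _ _ _⟩

theorem Submodule.exists_le_finrank_eq [FiniteDimensional K V] (H : Submodule K V) {d : ℕ}
    (hd : d ≤ finrank K H) : ∃ U ≤ H, finrank K U = d := by
  let b := finBasis K H
  refine ⟨span K (Set.range fun i : Fin d => (b (Fin.castLE hd i) : V)), ?_, ?_⟩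
  · exact span_le.2 (Set.range_subset_iff.2 fun i => (b _).2)
  · rw [finrank_span_eq_card]
    · simp
    · exact (b.linearIndependent.map' H.subtype H.ker_subtype).comp _ (Fin.castLE_injective hd)

end Subspaces

namespace LinearMap

variable {K V : Type*} [Field K] [AddCommGroup V] [Module K V] (lam : V →ₗ[K] K)

theorem isCompl_ker_span_singleton {v : V} (hv : lam v ≠ 0) : IsCompl (ker lam) (K ∙ v) :=
  isCompl_span_singleton_of_isCoatom_of_notMem
    (isCoatom_ker_of_surjective (lam.surjective_of_ne_zero fun h => hv (by simp [h]))) hv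

theorem exists_mem_apply_eq_of_not_le_ker {W : Submodule K V} (hW : ¬ W ≤ ker lam) (c : K) :
    ∃ w ∈ W, lam w = c := by
  obtain ⟨w, hwW, hw⟩ := SetLike.not_le_iff_exists.1 hW
  exact ⟨(c / lam w) • w, W.smul_mem _ hwW, by simp [div_mul_cancel₀ c hw]⟩

theorem span_singleton_sup_inf_ker {W : Submodule K V} {w : V} (hwW : w ∈ W) (hw : lam w ≠ 0) :
    (K ∙ w) ⊔ ker lam ⊓ W = W := by
  rw [← sup_inf_assoc_of_le _ ((span_singleton_le_iff_mem w W).2 hwW), sup_comm,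
    (lam.isCompl_ker_span_singleton hw).sup_eq_top, top_inf_eq]

theorem finrank_span_singleton_sup_of_le_ker [FiniteDimensional K V] {U : Submodule K V}
    (hU : U ≤ ker lam) {v : V} (hv : lam v ≠ 0) : finrank K ↥((K ∙ v) ⊔ U) = finrank K U + 1 := by
  have hdisj : (K ∙ v) ⊓ U = ⊥ :=
    ((lam.isCompl_ker_span_singleton hv).disjoint.mono_left hU).symm.eq_bot
  have := finrank_sup_add_finrank_inf_eq (K ∙ v) U
  rw [hdisj, finrank_bot, finrank_span_singleton (fun h => hv (by simp [h]))] at this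
  omega

theorem map_le_ker_iff {g : V ≃ₗ[K] V} (hg : ∀ v, lam (g v) = lam v) {W : Submodule K V} :
    W.map (g : V →ₗ[K] V) ≤ ker lam ↔ W ≤ ker lam := by
  rw [map_le_iff_le_comap, ← ker_comp]
  congr! 2
  exact LinearMap.ext hg

theorem exists_linearEquiv_map_eq_apply_eq [FiniteDimensional K V] {U U' : Submodule K V}
    (hU : U ≤ ker lam) (hU' : U' ≤ ker lam) (hUU' : finrank K U = finrank K U') {v v' : V}
    (hv : lam v ≠ 0) (hvv' : lam v' = lam v) :
    ∃ g : V ≃ₗ[K] V, (∀ x, lam (g x) = lam x) ∧ U.map (g : V →ₗ[K] V) = U' ∧ g v = v' := by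
  set H := ker lam
  have hv' : lam v' ≠ 0 := hvv' ▸ hv
  have hv₀ : v ≠ 0 := fun h => hv (by simp [h])
  have hv₀' : v' ≠ 0 := fun h => hv' (by simp [h])
  obtain ⟨h₀, hh₀⟩ := exists_linearEquiv_map_eq_of_finrank_eq
    (U := U.comap H.subtype) (U' := U'.comap H.subtype) (by
      rw [(comapSubtypeEquivOfLe hU).finrank_eq, (comapSubtypeEquivOfLe hU').finrank_eq, hUU'])
  let f : (K ∙ v) ≃ₗ[K] (K ∙ v') :=
    (LinearEquiv.toSpanNonzeroSingleton K V v hv₀).symm ≪≫ₗ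
      LinearEquiv.toSpanNonzeroSingleton K V v' hv₀'
  have hH := lam.isCompl_ker_span_singleton hv
  let g := LinearEquiv.ofIsCompl hH (lam.isCompl_ker_span_singleton hv') h₀ f
  have hgv : g v = v' := by
    have := LinearEquiv.ofIsCompl_apply_right hH (lam.isCompl_ker_span_singleton hv') h₀ f
      (LinearEquiv.toSpanNonzeroSingleton K V v hv₀ 1)
    rwa [LinearEquiv.trans_apply, LinearEquiv.symm_apply_apply,
      LinearEquiv.toSpanNonzeroSingleton_one, LinearEquiv.toSpanNonzeroSingleton_one] at this
  refine ⟨g, fun x => LinearMap.congr_fun (?_ : lam ∘ₗ (g : V →ₗ[K] V) = lam) x, ?_, hgv⟩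
  · refine ext_on_codisjoint hH.codisjoint (fun x hx => ?_) (eqOn_span fun x hx => ?_)
    · simp [g, LinearEquiv.ofIsCompl_apply_left _ _ _ _ ⟨x, hx⟩, mem_ker.1 hx]
    · simp [Set.mem_singleton_iff.1 hx, hgv, hvv']
  · calc U.map (g : V →ₗ[K] V) = ((U.comap H.subtype).map H.subtype).map (g : V →ₗ[K] V) := by
          rw [map_comap_subtype, inf_eq_right.2 hU]
      _ = ((U.comap H.subtype).map (h₀ : H →ₗ[K] H)).map H.subtype := by
          rw [← map_comp, ← map_comp, LinearEquiv.ofIsCompl_comp_subtype_left]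
      _ = U' := by rw [hh₀, map_comap_subtype, inf_eq_right.2 hU']

theorem finrank_eq_finrank_inf_ker_add_one [FiniteDimensional K V] {W : Submodule K V}
    (hW : ¬ W ≤ ker lam) : finrank K W = finrank K ↥(ker lam ⊓ W) + 1 := by
  obtain ⟨w, hwW, hw⟩ := lam.exists_mem_apply_eq_of_not_le_ker hW 1
  have hw₀ : lam w ≠ 0 := hw ▸ one_ne_zero
  conv_lhs => rw [← lam.span_singleton_sup_inf_ker hwW hw₀]
  exact lam.finrank_span_singleton_sup_of_le_ker inf_le_left hw₀

theorem exists_linearEquiv_map_eq_iff_le_ker_iff [FiniteDimensional K V] (hlam : lam ≠ 0)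
    {W W' : Submodule K V} (h : finrank K W = finrank K W') :
    (∃ g : V ≃ₗ[K] V, (∀ v, lam (g v) = lam v) ∧ W.map (g : V →ₗ[K] V) = W') ↔
      (W ≤ ker lam ↔ W' ≤ ker lam) := by
  refine ⟨fun ⟨g, hg, hmap⟩ => hmap ▸ (lam.map_le_ker_iff hg).symm, fun hiff => ?_⟩
  by_cases hW : W ≤ ker lam
  · obtain ⟨v, hv⟩ := DFunLike.ne_iff.1 hlam
    obtain ⟨g, hg, hmap, -⟩ := lam.exists_linearEquiv_map_eq_apply_eq hW (hiff.1 hW) h hv rfl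
    exact ⟨g, hg, hmap⟩
  · have hW' : ¬ W' ≤ ker lam := mt hiff.2 hW
    obtain ⟨w, hwW, hw⟩ := lam.exists_mem_apply_eq_of_not_le_ker hW 1
    obtain ⟨w', hw'W', hw'⟩ := lam.exists_mem_apply_eq_of_not_le_ker hW' 1
    have hw₀ : lam w ≠ 0 := hw ▸ one_ne_zero
    have hrank : finrank K ↥(ker lam ⊓ W) = finrank K ↥(ker lam ⊓ W') := by
      have := lam.finrank_eq_finrank_inf_ker_add_one hW
      have := lam.finrank_eq_finrank_inf_ker_add_one hW'
      omega
    obtain ⟨g, hg, hmap, hgw⟩ := lam.exists_linearEquiv_map_eq_apply_eq inf_le_left inf_le_left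
      hrank hw₀ (hw'.trans hw.symm)
    refine ⟨g, hg, ?_⟩
    calc W.map (g : V →ₗ[K] V) = ((K ∙ w) ⊔ ker lam ⊓ W).map (g : V →ₗ[K] V) := by
          rw [lam.span_singleton_sup_inf_ker hwW hw₀]
      _ = (K ∙ w') ⊔ ker lam ⊓ W' := by
          rw [Submodule.map_sup, hmap, map_span, Set.image_singleton, LinearEquiv.coe_coe, hgw]
      _ = W' := lam.span_singleton_sup_inf_ker hw'W' (hw' ▸ one_ne_zero)

end LinearMap

/-- The stabilizer of a nonzero linear functional (the "mirabolic" subgroup) has exactly two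
orbits on `d`-dimensional subspaces: two subspaces are in the same orbit iff they are both
contained, or both not contained, in the kernel of the functional. -/
theorem mirabolic_two_orbits {K V : Type*} [Field K] [AddCommGroup V] [Module K V]
    [FiniteDimensional K V] (lam : V →ₗ[K] K) (hlam : lam ≠ 0) (d : ℕ) :
    (∀ (_ : 1 ≤ d) (_ : d ≤ Module.finrank K V) (W W' : Submodule K V),
        Module.finrank K W = d → Module.finrank K W' = d →
        ((∃ g : V ≃ₗ[K] V, (∀ v, lam (g v) = lam v) ∧
            W.map (g : V →ₗ[K] V) = W') ↔
          (W ≤ LinearMap.ker lam ↔ W' ≤ LinearMap.ker lam))) ∧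
    (1 ≤ d → d ≤ Module.finrank K V - 1 →
      ∃ W₁ W₂ : Submodule K V, Module.finrank K W₁ = d ∧ Module.finrank K W₂ = d ∧
        ¬ (∃ g : V ≃ₗ[K] V, (∀ v, lam (g v) = lam v) ∧
            W₁.map (g : V →ₗ[K] V) = W₂) ∧
        ∀ W : Submodule K V, Module.finrank K W = d →
          (∃ g : V ≃ₗ[K] V, (∀ v, lam (g v) = lam v) ∧
              W₁.map (g : V →ₗ[K] V) = W) ∨
          (∃ g : V ≃ₗ[K] V, (∀ v, lam (g v) = lam v) ∧
              W₂.map (g : V →ₗ[K] V) = W)) := by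
  have orbit_iff {W W' : Submodule K V} (h : finrank K W = finrank K W') :=
    lam.exists_linearEquiv_map_eq_iff_le_ker_iff hlam h
  refine ⟨fun _ _ W W' hW hW' => orbit_iff (hW.trans hW'.symm), fun hd₁ hd => ?_⟩
  have hker : finrank K (LinearMap.ker lam) + 1 = finrank K V :=
    Module.Dual.finrank_ker_add_one_of_ne_zero hlam
  obtain ⟨W₁, hW₁, hW₁d⟩ := (LinearMap.ker lam).exists_le_finrank_eq (d := d) (by omega)
  obtain ⟨U, hU, hUd⟩ := (LinearMap.ker lam).exists_le_finrank_eq (d := d - 1) (by omega)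
  obtain ⟨v, hv⟩ := DFunLike.ne_iff.1 hlam
  have hW₂ : ¬ (K ∙ v) ⊔ U ≤ LinearMap.ker lam :=
    fun h => hv (h (mem_sup_left (mem_span_singleton_self v)))
  have hW₂d : finrank K ↥((K ∙ v) ⊔ U) = d := by
    rw [lam.finrank_span_singleton_sup_of_le_ker hU hv]
    omega
  refine ⟨W₁, (K ∙ v) ⊔ U, hW₁d, hW₂d, ?_, fun W hW => ?_⟩
  · rw [orbit_iff (hW₁d.trans hW₂d.symm)]
    exact fun h => hW₂ (h.1 hW₁)
  · by_cases hWk : W ≤ LinearMap.ker lam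
    · exact .inl ((orbit_iff (hW₁d.trans hW.symm)).2 (iff_of_true hW₁ hWk))
    · exact .inr ((orbit_iff (hW₂d.trans hW.symm)).2 (iff_of_false hW₂ hWk))
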